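/- arXiv:2512.19922 — 5 statements merged into one kernel-verified Lean document; each statement's English description precedes it below -/
import Mathlib

section
/- Russo–Dye theorem (finite-dimensional): every positive unital linear map T on d×d complex matrices has operator norm equal to 1, where the operator norm is taken with respect to the matrix operator norm. Consequently, every eigenvalue z of T satisfies |z| ≤ 1. -/
/-!
A unitary `u` with finite spectrum is `∑ z • P z` over its spectrum, with positive spectral
projections `P z` summing to `1`. Hence `T u = ∑ z • T (P z)` with `T (P z) ≥ 0`, `∑ T (P z) = 1`
and `‖z‖ = 1`, and two Cauchy–Schwarz inequalities give `‖T u‖ ≤ 1`. An invertible contraction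
`y = w * |y|` (polar decomposition) is the midpoint of the unitaries `w * v` and `w * star v`,
where `v = |y| + i √(1 - |y|²)`, so `‖T y‖ ≤ ‖y‖` for invertible `y`. Invertible matrices are
dense because spectra of matrices are finite.
-/

open Matrix ComplexOrder

open scoped Matrix.Norms.L2Operator InnerProductSpace ComplexConjugate

namespace ContinuousLinearMap

variable {E : Type*} [NormedAddCommGroup E] [InnerProductSpace ℂ E] [CompleteSpace E]

theorem norm_sum_smul_le_one_of_sum_eq_one {ι : Type*} (s : Finset ι) {Q : ι → E →L[ℂ] E}
    (hQ : ∀ i ∈ s, 0 ≤ Q i) (hsum : ∑ i ∈ s, Q i = 1) {c : ι → ℂ} (hc : ∀ i ∈ s, ‖c i‖ ≤ 1) :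
    ‖∑ i ∈ s, c i • Q i‖ ≤ 1 := by
  set R : ι → E →L[ℂ] E := fun i => CFC.sqrt (Q i)
  have hinner (i : ι) (hi : i ∈ s) (x y : E) : ⟪Q i x, y⟫_ℂ = ⟪R i x, R i y⟫_ℂ := by
    conv_lhs => rw [← CFC.sqrt_mul_sqrt_self (Q i) (hQ i hi)]
    change ⟪R i (R i x), y⟫_ℂ = _
    rw [← adjoint_inner_right, (CFC.sqrt_nonneg (Q i)).isSelfAdjoint.adjoint_eq]
  have hnorm (x : E) : ∑ i ∈ s, ‖R i x‖ ^ 2 = ‖x‖ ^ 2 := by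
    have hx : ∑ i ∈ s, ⟪Q i x, x⟫_ℂ = ⟪x, x⟫_ℂ := by
      rw [← sum_inner, ← _root_.sum_apply, hsum, one_apply_eq_self]
    rw [← inner_self_eq_norm_sq (𝕜 := ℂ), ← hx, map_sum]
    refine Finset.sum_congr rfl fun i hi => ?_
    rw [hinner i hi, inner_self_eq_norm_sq (𝕜 := ℂ)]
  refine opNorm_le_of_re_inner_le zero_le_one fun x y hx hy => ?_
  calc RCLike.re ⟪(∑ i ∈ s, c i • Q i) x, y⟫_ℂ
      ≤ ‖⟪(∑ i ∈ s, c i • Q i) x, y⟫_ℂ‖ := RCLike.re_le_norm _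
    _ = ‖∑ i ∈ s, conj (c i) * ⟪R i x, R i y⟫_ℂ‖ := by
      rw [_root_.sum_apply, sum_inner]
      congr 1
      refine Finset.sum_congr rfl fun i hi => ?_
      rw [_root_.smul_apply, inner_smul_left, hinner i hi]
    _ ≤ ∑ i ∈ s, ‖R i x‖ * ‖R i y‖ := by
      refine (norm_sum_le _ _).trans (Finset.sum_le_sum fun i hi => ?_)
      rw [norm_mul, Complex.norm_conj]
      exact (mul_le_of_le_one_left (norm_nonneg _) (hc i hi)).trans (norm_inner_le_norm _ _)
    _ ≤ √(∑ i ∈ s, ‖R i x‖ ^ 2) * √(∑ i ∈ s, ‖R i y‖ ^ 2) := Real.sum_mul_le_sqrt_mul_sqrt _ _ _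
    _ = 1 := by rw [hnorm, hnorm, hx, hy]; simp

end ContinuousLinearMap

open scoped MatrixOrder in
theorem Matrix.l2_opNorm_sum_smul_le_one_of_sum_eq_one {n ι : Type*} [Fintype n] [DecidableEq n]
    (s : Finset ι) {Q : ι → Matrix n n ℂ} (hQ : ∀ i ∈ s, 0 ≤ Q i) (hsum : ∑ i ∈ s, Q i = 1)
    {c : ι → ℂ} (hc : ∀ i ∈ s, ‖c i‖ ≤ 1) :
    ‖∑ i ∈ s, c i • Q i‖ ≤ 1 := by
  rw [cstar_norm_def, map_sum]
  simp only [map_smul]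
  exact ContinuousLinearMap.norm_sum_smul_le_one_of_sum_eq_one s
    (fun i hi => map_nonneg toEuclideanCLM (hQ i hi)) (by rw [← map_sum, hsum, map_one]) hc

section CStarAlgebra

variable {A : Type*} [CStarAlgebra A]

noncomputable def spectralProjection (a : A) (z : ℂ) : A :=
  cfc (fun w : ℂ => if w = z then (1 : ℂ) else 0) a

theorem cfc_eq_sum_smul_spectralProjection (a : A) [IsStarNormal a] (h : (spectrum ℂ a).Finite)
    (f : ℂ → ℂ) : cfc f a = ∑ z ∈ h.toFinset, f z • spectralProjection a z := by
  simp only [spectralProjection, ← cfc_const_mul _ _ a (h.continuousOn _)]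
  rw [← cfc_sum _ a _ fun z _ => h.continuousOn _]
  refine cfc_congr fun w hw => ?_
  simp [Finset.sum_apply, h.mem_toFinset.mpr hw]

variable [PartialOrder A] [StarOrderedRing A]

theorem spectralProjection_nonneg (a : A) (z : ℂ) : 0 ≤ spectralProjection a z :=
  cfc_nonneg fun w _ => by split_ifs <;> simp

theorem IsUnit.exists_mem_unitary_eq_mul_abs {y : A} (hy : IsUnit y) :
    ∃ u ∈ unitary A, y = u * CFC.abs y := by
  obtain ⟨b, hb⟩ : IsUnit (CFC.abs y) :=
    isUnit_mul_self_iff.mp (by rw [CFC.abs_mul_abs]; exact hy.star.mul hy)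
  have hb_star : star b = b := Units.ext <| by
    rw [Units.coe_star, hb]; exact (CFC.abs_nonneg y).isSelfAdjoint.star_eq
  have hb_inv_star : star (↑b⁻¹ : A) = ↑b⁻¹ := by rw [← Units.coe_star_inv, hb_star]
  refine ⟨y * ↑b⁻¹, (hy.mul b⁻¹.isUnit).mem_unitary_iff_star_mul_self.mpr ?_,
    by rw [← hb, Units.inv_mul_cancel_right]⟩
  calc star (y * ↑b⁻¹) * (y * ↑b⁻¹) = ↑b⁻¹ * (star y * y) * ↑b⁻¹ := by
        rw [star_mul, hb_inv_star, mul_assoc, mul_assoc, mul_assoc]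
    _ = 1 := by rw [← CFC.abs_mul_abs, ← hb]; simp

theorem IsUnit.mem_convexHull_unitary {y : A} (hy : IsUnit y) (hy1 : ‖y‖ ≤ 1) :
    y ∈ convexHull ℝ (unitary A : Set A) := by
  obtain ⟨w, hw, hwy⟩ := hy.exists_mem_unitary_eq_mul_abs
  let a : selfAdjoint A := ⟨CFC.abs y, (CFC.abs_nonneg y).isSelfAdjoint⟩
  let v := selfAdjoint.unitarySelfAddISMul a (by simpa [a, CFC.norm_abs] using hy1)
  have hmid : y = midpoint ℝ (w * v) (w * star v) := by
    rw [midpoint_eq_smul_add, ← mul_add, ← mul_smul_comm, invOf_eq_inv, Unitary.coe_star,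
      ← realPart_apply_coe, selfAdjoint.realPart_unitarySelfAddISMul, hwy]
  rw [hmid]
  exact segment_subset_convexHull (mul_mem hw v.2) (mul_mem hw (star v).2)
    (midpoint_mem_segment _ _)

end CStarAlgebra

theorem mem_closure_setOf_isUnit {A : Type*} [NormedRing A] [NormedAlgebra ℂ A] {a : A}
    (ha : (spectrum ℂ a).Finite) : a ∈ closure {x : A | IsUnit x} := by
  have hlim : Filter.Tendsto (fun t : ℂ => a - algebraMap ℂ A t) (nhdsWithin 0 {0}ᶜ) (nhds a) :=
    ((continuous_const.sub (continuous_algebraMap ℂ A)).tendsto' 0 a (by simp)).mono_left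
      nhdsWithin_le_nhds
  refine mem_closure_of_tendsto hlim ?_
  filter_upwards [nhdsNE_of_nhdsNE_sdiff_finite Filter.univ_mem ha.to_subtype] with t ht
  simpa using (spectrum.notMem_iff.mp ht.2).neg

section PositiveMap

open scoped MatrixOrder

variable {A : Type*} [CStarAlgebra A] [PartialOrder A] [StarOrderedRing A]
  {m : Type*} [Fintype m] [DecidableEq m] {T : A →ₗ[ℂ] Matrix m m ℂ}

theorem norm_map_unitary_le_one (hT : ∀ a, 0 ≤ a → 0 ≤ T a) (hT1 : T 1 = 1) (u : unitary A)
    (hu : (spectrum ℂ (u : A)).Finite) : ‖T u‖ ≤ 1 := by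
  have hsum := cfc_eq_sum_smul_spectralProjection (u : A) hu fun _ => 1
  rw [cfc_const_one ℂ (u : A)] at hsum
  simp only [one_smul] at hsum
  have hdecomp := cfc_eq_sum_smul_spectralProjection (u : A) hu id
  rw [cfc_id ℂ (u : A)] at hdecomp
  rw [hdecomp, map_sum]
  simp only [map_smul]
  refine Matrix.l2_opNorm_sum_smul_le_one_of_sum_eq_one _
    (fun z _ => hT _ (spectralProjection_nonneg _ _)) (by rw [← map_sum, ← hsum, hT1])
    fun z hz => ?_
  simpa using (spectrum.subset_circle_of_unitary u.2 (hu.mem_toFinset.mp hz)).le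

theorem norm_map_le_one_of_mem_convexHull (hT : ∀ a, 0 ≤ a → 0 ≤ T a) (hT1 : T 1 = 1)
    (hA : ∀ a : A, (spectrum ℂ a).Finite) {y : A} (hy : y ∈ convexHull ℝ (unitary A : Set A)) :
    ‖T y‖ ≤ 1 := by
  have hsub : convexHull ℝ (unitary A : Set A) ⊆ T ⁻¹' Metric.closedBall 0 1 :=
    convexHull_min (fun u hu => by simpa using norm_map_unitary_le_one hT hT1 ⟨u, hu⟩ (hA u))
      ((convex_closedBall 0 1).linear_preimage (T.restrictScalars ℝ))
  simpa using hsub hy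

theorem norm_map_le_of_isUnit (hT : ∀ a, 0 ≤ a → 0 ≤ T a) (hT1 : T 1 = 1)
    (hA : ∀ a : A, (spectrum ℂ a).Finite) {y : A} (hy : IsUnit y) : ‖T y‖ ≤ ‖y‖ := by
  rcases eq_or_ne y 0 with rfl | hy0
  · simp
  have hn : 0 < ‖y‖ := norm_pos_iff.mpr hy0
  have hc : (‖y‖ : ℂ)⁻¹ ≠ 0 := by simpa using hn.ne'
  have hy1 : ‖(‖y‖ : ℂ)⁻¹ • y‖ ≤ 1 := by rw [norm_smul]; simp [hn.ne']
  have hunit : IsUnit ((‖y‖ : ℂ)⁻¹ • y) := by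
    rw [Algebra.smul_def]; exact (hc.isUnit.map _).mul hy
  have h := norm_map_le_one_of_mem_convexHull hT hT1 hA (hunit.mem_convexHull_unitary hy1)
  rw [map_smul, norm_smul] at h
  simpa [inv_mul_le_iff₀ hn] using h

end PositiveMap

open scoped MatrixOrder in
theorem Matrix.l2_opNorm_map_le {n m : Type*} [Fintype n] [DecidableEq n] [Fintype m]
    [DecidableEq m] (T : Matrix n n ℂ →ₗ[ℂ] Matrix m m ℂ)
    (hT : ∀ X, X.PosSemidef → (T X).PosSemidef) (hT1 : T 1 = 1) (X : Matrix n n ℂ) :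
    ‖T X‖ ≤ ‖X‖ := by
  have hclosed : IsClosed {X : Matrix n n ℂ | ‖T X‖ ≤ ‖X‖} :=
    isClosed_le (continuous_norm.comp T.continuous_of_finiteDimensional) continuous_norm
  refine closure_minimal (fun Y hY => ?_) hclosed
    (mem_closure_setOf_isUnit (Matrix.finite_spectrum X))
  exact norm_map_le_of_isUnit (fun X hX => (hT X hX.posSemidef).nonneg) hT1
    Matrix.finite_spectrum hY

/-- Russo–Dye theorem (finite-dimensional): a positive unital linear map on `d × d` complex
matrices has operator norm `1` (with respect to the matrix `ℓ²`-operator norm); consequently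
every eigenvalue `z` satisfies `‖z‖ ≤ 1`. -/
theorem russo_dye (d : ℕ) [NeZero d]
    (T : Matrix (Fin d) (Fin d) ℂ →ₗ[ℂ] Matrix (Fin d) (Fin d) ℂ)
    (hpos : ∀ X : Matrix (Fin d) (Fin d) ℂ, X.PosSemidef → (T X).PosSemidef)
    (hunital : T 1 = 1) :
    sSup ((fun X : Matrix (Fin d) (Fin d) ℂ => ‖T X‖) '' {X | ‖X‖ = 1}) = 1 ∧
      ∀ (z : ℂ) (X : Matrix (Fin d) (Fin d) ℂ), X ≠ 0 → T X = z • X → ‖z‖ ≤ 1 := by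
  have hbound := Matrix.l2_opNorm_map_le T hpos hunital
  refine ⟨IsGreatest.csSup_eq ⟨⟨1, norm_one, by simp [hunital]⟩, ?_⟩, fun z X hX hTX => ?_⟩
  · rintro _ ⟨X, hX, rfl⟩
    exact (hbound X).trans_eq hX
  · have h := hbound X
    rw [hTX, norm_smul] at h
    exact (mul_le_iff_le_one_left (norm_pos_iff.mpr hX)).mp h
end

section
/- Kadison–Schwarz inequality for 2-positive unital maps: if T is a completely positive (or just 2-positive) unital linear map on d×d complex matrices, then for every matrix A, T(A†A) ⪰ T(A†) T(A), i.e., T(A†A) - T(A†)T(A) is positive semidefinite. -/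
open Matrix ComplexOrder

/-- Kadison–Schwarz inequality: if `T` is a 2-positive unital linear map on `d × d` complex
matrices, then `T (Aᴴ * A) ⪰ T Aᴴ * T A` for every matrix `A`. -/
theorem kadison_schwarz (d : ℕ)
    (T : Matrix (Fin d) (Fin d) ℂ →ₗ[ℂ] Matrix (Fin d) (Fin d) ℂ)
    (h2pos : ∀ R : Matrix (Fin d ⊕ Fin d) (Fin d ⊕ Fin d) ℂ, R.PosSemidef →
      (Matrix.fromBlocks (T R.toBlocks₁₁) (T R.toBlocks₁₂)
        (T R.toBlocks₂₁) (T R.toBlocks₂₂)).PosSemidef)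
    (hunital : T 1 = 1) :
    ∀ A : Matrix (Fin d) (Fin d) ℂ, (T (Aᴴ * A) - T Aᴴ * T A).PosSemidef := by
  intro A
  set R : Matrix (Fin d ⊕ Fin d) (Fin d ⊕ Fin d) ℂ :=
    Matrix.fromBlocks 1 A Aᴴ (Aᴴ * A) with hR
  have hRpsd : R.PosSemidef := by
    have h := Matrix.posSemidef_conjTranspose_mul_self
      (Matrix.fromBlocks 1 A 0 0 : Matrix (Fin d ⊕ Fin d) (Fin d ⊕ Fin d) ℂ)
    have heq : (Matrix.fromBlocks 1 A 0 0 : Matrix (Fin d ⊕ Fin d) (Fin d ⊕ Fin d) ℂ)ᴴ *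
        Matrix.fromBlocks 1 A 0 0 = R := by
      simp [Matrix.fromBlocks_conjTranspose, Matrix.fromBlocks_multiply, hR]
    rwa [heq] at h
  have hT := h2pos R hRpsd
  simp only [hR, Matrix.toBlocks_fromBlocks₁₁, Matrix.toBlocks_fromBlocks₁₂,
    Matrix.toBlocks_fromBlocks₂₁, Matrix.toBlocks_fromBlocks₂₂, hunital] at hT
  -- T Aᴴ = (T A)ᴴ from hermiticity
  have hherm := hT.1
  have hE : T Aᴴ = (T A)ᴴ := by
    have := congrArg Matrix.toBlocks₂₁ hherm
    simpa [Matrix.IsHermitian, Matrix.fromBlocks_conjTranspose,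
      Matrix.toBlocks_fromBlocks₂₁] using this.symm
  rw [hE] at hT ⊢
  haveI : Invertible (1 : Matrix (Fin d) (Fin d) ℂ) := invertibleOne
  have h1 : (1 : Matrix (Fin d) (Fin d) ℂ).PosDef := Matrix.PosDef.one
  have := (Matrix.PosDef.fromBlocks₁₁ (T A) (T (Aᴴ * A)) h1).mp hT
  simpa using this
end

section
/- Burnside's theorem on matrix algebras: a unital subalgebra 𝔸 of the algebra of d×d complex matrices is irreducible (the only subspaces of ℂ^d invariant under all elements of 𝔸 are {0} and ℂ^d) if and only if 𝔸 equals the full matrix algebra M_d(ℂ). -/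
/-!
`ℂ^d` is a simple module over an irreducible `𝔸`. By Schur's lemma over the algebraically closed
field `ℂ`, its `𝔸`-linear endomorphisms are scalars, so every `ℂ`-linear map of `ℂ^d` commutes
with them, and the Jacobson density theorem realises it as the action of an element of `𝔸`.
-/

open Module

section Burnside

variable (k : Type*) {A V : Type*} [Field k] [IsAlgClosed k] [Ring A] [Algebra k A]
  [AddCommGroup V] [Module k V] [FiniteDimensional k V] [Module A V] [IsScalarTower k A V]
  [IsSimpleModule A V]

theorem IsSimpleModule.lsmul_surjective_of_isAlgClosed :
    Function.Surjective (Algebra.lsmul k k V : A →ₐ[k] End k V) := by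
  have hschur := IsSimpleModule.algebraMap_end_bijective_of_isAlgClosed k (A := A) (V := V)
  have : Module.Finite (End A V) V := Module.Finite.of_restrictScalars_finite k (End A V) V
  intro f
  let g : End (End A V) V :=
    { f with
      map_smul' := fun φ v => by
        obtain ⟨c, rfl⟩ := hschur.2 φ
        simp }
  obtain ⟨a, ha⟩ := Module.Finite.toModuleEnd_moduleEnd_surjective g
  exact ⟨a, LinearMap.ext fun v => congr($ha v)⟩

end Burnside

theorem Subalgebra.isSimpleModule_of_forall_invariant {k B V : Type*} [CommRing k]
    [Ring B] [Algebra k B] [AddCommGroup V] [Nontrivial V] [Module k V] [Module B V]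
    [IsScalarTower k B V] (S : Subalgebra k B)
    (h : ∀ W : Submodule k V, (∀ b ∈ S, ∀ v ∈ W, b • v ∈ W) → W = ⊥ ∨ W = ⊤) :
    IsSimpleModule S V where
  eq_bot_or_eq_top W := by
    simpa only [Submodule.restrictScalars_eq_bot_iff, Submodule.restrictScalars_eq_top_iff]
      using h (W.restrictScalars k) fun b hb v hv => W.smul_mem ⟨b, hb⟩ hv

namespace Matrix

variable {K n : Type*} [Field K] [Fintype n] [DecidableEq n]

theorem exists_mulVec_eq_of_ne_zero {v : n → K} (hv : v ≠ 0) (u : n → K) :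
    ∃ M : Matrix n n K, M *ᵥ v = u := by
  have : Nontrivial (n → K) := ⟨⟨v, 0, hv⟩⟩
  obtain ⟨f, hf⟩ := IsSimpleModule.toSpanSingleton_surjective (End K (n → K)) hv u
  exact ⟨LinearMap.toMatrix' f, by simpa using hf⟩

theorem eq_bot_or_eq_top_of_forall_mulVec_mem (W : Submodule K (n → K))
    (hW : ∀ M : Matrix n n K, ∀ v ∈ W, M *ᵥ v ∈ W) : W = ⊥ ∨ W = ⊤ := by
  refine or_iff_not_imp_left.mpr fun hbot => W.eq_top_iff'.mpr fun u => ?_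
  obtain ⟨v, hvW, hv⟩ := W.exists_mem_ne_zero_of_ne_bot hbot
  obtain ⟨M, rfl⟩ := exists_mulVec_eq_of_ne_zero hv u
  exact hW M v hvW

theorem subalgebra_eq_top_of_forall_invariant [IsAlgClosed K] (A : Subalgebra K (Matrix n n K))
    (h : ∀ W : Submodule K (n → K), (∀ M ∈ A, ∀ v ∈ W, M *ᵥ v ∈ W) → W = ⊥ ∨ W = ⊤) :
    A = ⊤ := by
  refine eq_top_iff.mpr fun M _ => ?_
  obtain ⟨a, ha⟩ : ∃ a : A, ∀ v : n → K, a • v = M • v := by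
    cases subsingleton_or_nontrivial (n → K)
    · exact ⟨1, fun _ => Subsingleton.elim _ _⟩
    · have := A.isSimpleModule_of_forall_invariant h
      obtain ⟨a, ha⟩ := IsSimpleModule.lsmul_surjective_of_isAlgClosed K (A := A) (toLin' M)
      exact ⟨a, fun v => congr($ha v)⟩
  exact (ext_iff_smul.mpr ha : (a : Matrix n n K) = M) ▸ a.2

end Matrix

theorem burnside_matrix_algebra_general (d : ℕ)
    (A : Subalgebra ℂ (Matrix (Fin d) (Fin d) ℂ)) :
    (∀ W : Submodule ℂ (Fin d → ℂ),
        (∀ M ∈ A, ∀ v ∈ W, M.mulVec v ∈ W) → W = ⊥ ∨ W = ⊤) ↔ A = ⊤ := by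
  refine ⟨Matrix.subalgebra_eq_top_of_forall_invariant A, ?_⟩
  rintro rfl W hW
  exact Matrix.eq_bot_or_eq_top_of_forall_mulVec_mem W fun M => hW M Algebra.mem_top

/-- Burnside's theorem on matrix algebras: a unital subalgebra of `d × d` complex matrices is
irreducible (no nontrivial invariant subspace of `ℂ^d`) iff it is the full matrix algebra. -/
theorem burnside_matrix_algebra (d : ℕ) (hd : 1 ≤ d)
    (A : Subalgebra ℂ (Matrix (Fin d) (Fin d) ℂ)) :
    (∀ W : Submodule ℂ (Fin d → ℂ),
        (∀ M ∈ A, ∀ v ∈ W, M.mulVec v ∈ W) → W = ⊥ ∨ W = ⊤) ↔ A = ⊤ :=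
  burnside_matrix_algebra_general d A
end

section
/- If A is a positive semidefinite matrix and P an orthogonal projection with Tr(A) = Tr(P A), then A = P A P (equivalently, PA = AP = A). -/
/-!
With `Q = 1 - P`, the compression `Q A Q` is positive semidefinite with trace
`Tr (A Q) = Tr A - Tr (P A) = 0`, hence `Q A Q = 0`. Writing `A = Cᴴ C`, this says
`(C Q)ᴴ (C Q) = 0`, so `C Q = 0` and `A Q = 0`, i.e. `A P = A`; taking adjoints gives `P A = A`.
-/

open Matrix ComplexOrder

namespace Matrix.PosSemidef

variable {𝕜 n : Type*} [RCLike 𝕜] [Fintype n] {A : Matrix n n 𝕜}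

theorem conjTranspose_mul_mul_same_eq_zero_iff {m : Type*} (hA : A.PosSemidef)
    (B : Matrix n m 𝕜) : Bᴴ * A * B = 0 ↔ A * B = 0 := by
  classical
  obtain ⟨C, rfl⟩ : ∃ C : Matrix n n 𝕜, A = Cᴴ * C := by
    open MatrixOrder in exact CStarAlgebra.nonneg_iff_eq_star_mul_self.mp hA.nonneg
  rw [conjTranspose_mul_self_mul_eq_zero, ← conjTranspose_mul_self_eq_zero (A := C * B),
    conjTranspose_mul]
  simp only [Matrix.mul_assoc]

theorem mul_eq_zero_of_trace_mul_eq_zero (hA : A.PosSemidef) {Q : Matrix n n 𝕜}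
    (hQ : Q.IsHermitian) (hQ2 : IsIdempotentElem Q) (htr : (A * Q).trace = 0) : A * Q = 0 := by
  have hcompr : (Qᴴ * A * Q).PosSemidef := hA.conjTranspose_mul_mul_same Q
  have htr_compr : (Qᴴ * A * Q).trace = 0 := by
    rw [hQ.eq, trace_mul_cycle, hQ2.eq, trace_mul_comm, htr]
  exact (hA.conjTranspose_mul_mul_same_eq_zero_iff Q).mp (hcompr.trace_eq_zero_iff.mp htr_compr)

end Matrix.PosSemidef

/-- If `A` is positive semidefinite and `P` is an orthogonal projection with
`Tr A = Tr (P A)`, then `A = P A P` (equivalently `P A = A P = A`). -/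
theorem psd_trace_proj_eq (d : ℕ) (A P : Matrix (Fin d) (Fin d) ℂ)
    (hA : A.PosSemidef) (hP : P.IsHermitian) (hP2 : P * P = P)
    (htr : A.trace = (P * A).trace) :
    A = P * A * P ∧ P * A = A ∧ A * P = A := by
  have hQ : (1 - P).IsHermitian := isHermitian_one.sub hP
  have hQ2 : IsIdempotentElem (1 - P) := IsIdempotentElem.one_sub hP2
  have htrQ : (A * (1 - P)).trace = 0 := by
    rw [Matrix.mul_sub, Matrix.mul_one, trace_sub, trace_mul_comm, ← htr, sub_self]
  have hAP : A * P = A := by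
    have hAQ := hA.mul_eq_zero_of_trace_mul_eq_zero hQ hQ2 htrQ
    rwa [Matrix.mul_sub, Matrix.mul_one, sub_eq_zero, eq_comm] at hAQ
  have hPA : P * A = A := by
    simpa only [conjTranspose_mul, hP.eq, hA.isHermitian.eq] using congrArg conjTranspose hAP
  exact ⟨by rw [hPA, hAP], hPA, hAP⟩
end

section
/- Triviality of unit-modulus Jordan blocks: if a linear operator T on a finite-dimensional complex vector space satisfies ‖Tⁿ x‖ ≤ ‖x‖ for all n ∈ ℕ and all x (i.e., all powers of T are contractions), then every eigenvalue z of T with |z| = 1 is semisimple: the generalized eigenspace for z equals the eigenspace, i.e., ker(T - z)² = ker(T - z). -/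
/-- If all powers of a linear operator `T` on a finite-dimensional normed complex space are
contractions, then every eigenvalue `z` with `‖z‖ = 1` is semisimple:
`ker (T - z)² = ker (T - z)`. -/
theorem unit_modulus_eigenvalue_semisimple (V : Type*) [NormedAddCommGroup V]
    [NormedSpace ℂ V] [FiniteDimensional ℂ V] (T : Module.End ℂ V)
    (hT : ∀ (n : ℕ) (x : V), ‖(T ^ n) x‖ ≤ ‖x‖) (z : ℂ) (hz : ‖z‖ = 1) :
    LinearMap.ker ((T - z • 1) ^ 2) = LinearMap.ker (T - z • 1) := by
  set S := T - z • (1 : Module.End ℂ V) with hS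
  apply le_antisymm
  · intro x hx
    simp only [LinearMap.mem_ker] at hx ⊢
    set y := S x with hy
    have hSx : T x = z • x + y := by
      have : y = T x - z • x := by
        simp [hy, hS, LinearMap.sub_apply, LinearMap.smul_apply]
      rw [this]; abel
    have hSy : T y = z • y := by
      have h0 : S y = 0 := by
        have : S (S x) = (S ^ 2) x := by
          rw [pow_two]; rfl
        rw [hy, this, hx]
      have : T y - z • y = 0 := by
        simpa [hS, LinearMap.sub_apply, LinearMap.smul_apply] using h0
      linear_combination (norm := abel) this
    have key : ∀ n : ℕ, (T ^ (n + 1)) x = z ^ (n + 1) • x + (((n : ℂ) + 1) * z ^ n) • y := by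
      intro n
      induction n with
      | zero => simpa using hSx
      | succ n ih =>
        have h2 : (T ^ (n + 2)) x = T ((T ^ (n + 1)) x) := by
          rw [pow_succ']; rfl
        rw [h2, ih, map_add, map_smul, map_smul, hSx, hSy, smul_add,
          smul_smul, smul_smul]
        match_scalars <;> · push_cast; ring
    have bound : ∀ n : ℕ, ((n : ℝ) + 1) * ‖y‖ ≤ 2 * ‖x‖ := by
      intro n
      have h1 : ‖(T ^ (n + 1)) x‖ ≤ ‖x‖ := hT (n + 1) x
      rw [key n] at h1
      have h2 : ‖(((n : ℂ) + 1) * z ^ n) • y‖ ≤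
          ‖z ^ (n + 1) • x + (((n : ℂ) + 1) * z ^ n) • y‖ + ‖z ^ (n + 1) • x‖ := by
        calc ‖(((n : ℂ) + 1) * z ^ n) • y‖
            = ‖(z ^ (n + 1) • x + (((n : ℂ) + 1) * z ^ n) • y) - z ^ (n + 1) • x‖ := by
              congr 1; abel
          _ ≤ _ := norm_sub_le _ _
      have hn1 : ‖z ^ (n + 1) • x‖ = ‖x‖ := by
        rw [norm_smul, norm_pow, hz, one_pow, one_mul]
      have hn2 : ‖(((n : ℂ) + 1) * z ^ n) • y‖ = ((n : ℝ) + 1) * ‖y‖ := by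
        rw [norm_smul, norm_mul, norm_pow, hz, one_pow, mul_one]
        congr 1
        have : ((n : ℂ) + 1) = ((n + 1 : ℕ) : ℂ) := by push_cast; ring
        rw [this, Complex.norm_natCast]
        push_cast; ring
      rw [hn1, hn2] at h2
      linarith
    have hy0 : y = 0 := by
      by_contra h
      have hypos : 0 < ‖y‖ := norm_pos_iff.mpr h
      obtain ⟨n, hn⟩ := exists_nat_gt (2 * ‖x‖ / ‖y‖)
      have := bound n
      have h3 : ((n : ℝ) + 1) * ‖y‖ > 2 * ‖x‖ := by
        have : 2 * ‖x‖ / ‖y‖ < (n : ℝ) + 1 := by linarith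
        calc 2 * ‖x‖ = (2 * ‖x‖ / ‖y‖) * ‖y‖ := by field_simp
          _ < ((n : ℝ) + 1) * ‖y‖ := by
            exact mul_lt_mul_of_pos_right this hypos
      linarith
    exact hy0
  · intro x hx
    simp only [LinearMap.mem_ker] at hx ⊢
    rw [pow_two]
    show S (S x) = 0
    rw [hx, map_zero]
end
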